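/- Let μ : A⊗_k A → A be the multiplication map, Ω¹_u := ker μ with A-bimodule structure a·(x⊗y)·b = ax⊗yb, and d_u : A → Ω¹_u, a ↦ 1⊗a − a⊗1 (the universal first-order differential calculus). Then there exists Ξ ∈ Ω¹_u with d_u(a) = aΞ − Ξa for all a ∈ A (i.e. the universal calculus is inner) if and only if A is separable, i.e. there exists ι ∈ A⊗_k A with μ(ι) = 1 and aι = ιa for all a ∈ A; in that case Ξ := ι − 1⊗1 is such a generating one-form. Consequently, every right module over a separable algebra admits a hom-connection with respect to the universal differential calculus. -/

import Mathlib

/-!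
Adding `1 ⊗ 1` turns an inner form into a separability idempotent and back: `μ(1 ⊗ 1) = 1`, and the
commutator of `a` with `1 ⊗ 1` is `a ⊗ 1 - 1 ⊗ a = -d_u a`, so `d_u a = aΞ - Ξa` says exactly that
`Ξ + 1 ⊗ 1` commutes with `a`. Given an inner form `Ξ`, evaluation at `Ξ` is a hom-connection:
`(f·a)(Ξ) = f(aΞ) = f(Ξa + d_u a) = f(Ξ)·a + f(d_u a)`.
-/

open MulOpposite TensorProduct

noncomputable section

variable (k A : Type*) [Field k] [Ring A] [Algebra k A]

/-- The multiplication map `μ : A ⊗_k A → A`. -/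
def mulMap : A ⊗[k] A →ₗ[k] A := LinearMap.mul' k A

/-- The universal differential `d_u : A → A ⊗_k A`, `a ↦ 1⊗a − a⊗1`. -/
def du : A →ₗ[k] A ⊗[k] A :=
  TensorProduct.mk k A A 1 - (TensorProduct.mk k A A).flip 1

/-- Left multiplication by `a` on the first tensor factor: `x⊗y ↦ (ax)⊗y`. -/
def lmulT (a : A) : A ⊗[k] A →ₗ[k] A ⊗[k] A :=
  LinearMap.rTensor A (LinearMap.mulLeft k a)

/-- Right multiplication by `a` on the second tensor factor: `x⊗y ↦ x⊗(ya)`. -/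
def rmulT (a : A) : A ⊗[k] A →ₗ[k] A ⊗[k] A :=
  LinearMap.lTensor A (LinearMap.mulRight k a)

/-- The module of universal one-forms `Ω¹_u = ker μ`. -/
def univForms : Submodule k (A ⊗[k] A) := LinearMap.ker (mulMap k A)

/-- Right `A`-linearity of a map `Ω¹_u → M` (an element of `Hom_A(Ω¹_u, M)`). -/
def RtLinU {M : Type*} [AddCommGroup M] [Module k M] [Module Aᵐᵒᵖ M]
    (g : ↥(univForms k A) →ₗ[k] M) : Prop :=
  ∀ (t : ↥(univForms k A)) (a : A) (h : rmulT k A a t.1 ∈ univForms k A),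
    g ⟨rmulT k A a t.1, h⟩ = op a • g t

lemma mem_univForms_iff (t : A ⊗[k] A) : t ∈ univForms k A ↔ mulMap k A t = 0 :=
  LinearMap.mem_ker

lemma mulMap_one_tmul_one : mulMap k A (1 ⊗ₜ[k] 1) = 1 := by
  simp [mulMap]

lemma mulMap_lmulT (a : A) (x : A ⊗[k] A) :
    mulMap k A (lmulT k A a x) = a * mulMap k A x := by
  induction x using TensorProduct.induction_on with
  | zero => simp
  | tmul x y => simp [mulMap, lmulT, mul_assoc]
  | add x y hx hy => simp [hx, hy, mul_add]

lemma mulMap_rmulT (a : A) (x : A ⊗[k] A) :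
    mulMap k A (rmulT k A a x) = mulMap k A x * a := by
  induction x using TensorProduct.induction_on with
  | zero => simp
  | tmul x y => simp [mulMap, rmulT, mul_assoc]
  | add x y hx hy => simp [hx, hy, add_mul]

lemma lmulT_mem_univForms (a : A) {t : A ⊗[k] A} (ht : t ∈ univForms k A) :
    lmulT k A a t ∈ univForms k A := by
  rw [mem_univForms_iff] at ht ⊢
  rw [mulMap_lmulT, ht, mul_zero]

lemma rmulT_mem_univForms (a : A) {t : A ⊗[k] A} (ht : t ∈ univForms k A) :
    rmulT k A a t ∈ univForms k A := by
  rw [mem_univForms_iff] at ht ⊢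
  rw [mulMap_rmulT, ht, zero_mul]

lemma lmulT_sub_rmulT_one_tmul_one (a : A) :
    lmulT k A a (1 ⊗ₜ[k] 1) - rmulT k A a (1 ⊗ₜ[k] 1) = -du k A a := by
  simp [lmulT, rmulT, du]

def IsInnerForm (Ξ : A ⊗[k] A) : Prop :=
  Ξ ∈ univForms k A ∧ ∀ a : A, du k A a = lmulT k A a Ξ - rmulT k A a Ξ

def IsSeparabilityIdempotent (ι : A ⊗[k] A) : Prop :=
  mulMap k A ι = 1 ∧ ∀ a : A, lmulT k A a ι = rmulT k A a ι

theorem isInnerForm_iff_isSeparabilityIdempotent_add (Ξ : A ⊗[k] A) :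
    IsInnerForm k A Ξ ↔ IsSeparabilityIdempotent k A (Ξ + 1 ⊗ₜ[k] 1) := by
  have commutator (a : A) :
      lmulT k A a (Ξ + 1 ⊗ₜ[k] 1) - rmulT k A a (Ξ + 1 ⊗ₜ[k] 1) =
        (lmulT k A a Ξ - rmulT k A a Ξ) - du k A a := by
    have one := lmulT_sub_rmulT_one_tmul_one k A a
    rw [sub_eq_iff_eq_add] at one
    rw [map_add, map_add, one]
    abel
  refine and_congr ?_ (forall_congr' fun a => ?_)
  · rw [mem_univForms_iff, map_add, mulMap_one_tmul_one, add_eq_right]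
  · rw [← sub_eq_zero (a := lmulT k A a _), commutator, sub_eq_zero, eq_comm]

theorem isInnerForm_sub_one_tmul_one {ι : A ⊗[k] A} (hι : IsSeparabilityIdempotent k A ι) :
    IsInnerForm k A (ι - 1 ⊗ₜ[k] 1) := by
  rwa [isInnerForm_iff_isSeparabilityIdempotent_add, sub_add_cancel]

/-- `k`-linearity is phrased through representatives, since the right `A`-linear maps form a
subtype; `fa` stands for `f · a`. -/
def IsHomConnection {M : Type*} [AddCommGroup M] [Module k M] [Module Aᵐᵒᵖ M]
    (D : {g : ↥(univForms k A) →ₗ[k] M // RtLinU k A g} → M) : Prop :=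
  (∀ f g s : {g : ↥(univForms k A) →ₗ[k] M // RtLinU k A g},
      s.1 = f.1 + g.1 → D s = D f + D g) ∧
    (∀ (c : k) (f s : {g : ↥(univForms k A) →ₗ[k] M // RtLinU k A g}),
      s.1 = c • f.1 → D s = c • D f) ∧
    (∀ (f fa : {g : ↥(univForms k A) →ₗ[k] M // RtLinU k A g}) (a : A),
      (∀ (t : ↥(univForms k A)) (h : lmulT k A a t.1 ∈ univForms k A),
        fa.1 t = f.1 ⟨lmulT k A a t.1, h⟩) →
      ∀ h' : du k A a ∈ univForms k A,
        D fa = op a • D f + f.1 ⟨du k A a, h'⟩)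

theorem IsInnerForm.isHomConnection_eval {M : Type*} [AddCommGroup M] [Module k M]
    [Module Aᵐᵒᵖ M] {Ξ : A ⊗[k] A} (hΞ : IsInnerForm k A Ξ) :
    IsHomConnection k A (M := M) fun g => g.1 ⟨Ξ, hΞ.1⟩ := by
  refine ⟨fun _ _ _ hs => LinearMap.congr_fun hs _, fun _ _ _ hs => LinearMap.congr_fun hs _, ?_⟩
  intro f fa a hfa hd
  have hl := lmulT_mem_univForms k A a hΞ.1
  have hr := rmulT_mem_univForms k A a hΞ.1
  have split : (⟨lmulT k A a Ξ, hl⟩ : univForms k A) = ⟨rmulT k A a Ξ, hr⟩ + ⟨du k A a, hd⟩ := by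
    ext
    simp only [Submodule.coe_add, hΞ.2 a, add_sub_cancel]
  calc fa.1 ⟨Ξ, hΞ.1⟩ = f.1 ⟨lmulT k A a Ξ, hl⟩ := hfa ⟨Ξ, hΞ.1⟩ hl
    _ = f.1 ⟨rmulT k A a Ξ, hr⟩ + f.1 ⟨du k A a, hd⟩ := by rw [split, map_add]
    _ = op a • f.1 ⟨Ξ, hΞ.1⟩ + f.1 ⟨du k A a, hd⟩ := by rw [f.2 ⟨Ξ, hΞ.1⟩ a hr]

/-- The universal first-order calculus on `A` is inner iff `A` is
separable; in that case `Ξ := ι − 1⊗1` is a generating one-form, and every right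
`A`-module `M` admits a hom-connection with respect to the universal calculus. -/
theorem universal_calculus_inner_iff_separable
    (M : Type*) [AddCommGroup M] [Module k M] [Module Aᵐᵒᵖ M] :
    ((∃ Ξ : A ⊗[k] A, Ξ ∈ univForms k A ∧
        ∀ a : A, du k A a = lmulT k A a Ξ - rmulT k A a Ξ) ↔
      (∃ ι : A ⊗[k] A, mulMap k A ι = 1 ∧ ∀ a : A, lmulT k A a ι = rmulT k A a ι)) ∧
    (∀ ι : A ⊗[k] A, mulMap k A ι = 1 → (∀ a : A, lmulT k A a ι = rmulT k A a ι) →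
      (ι - 1 ⊗ₜ[k] 1) ∈ univForms k A ∧
        ∀ a : A, du k A a = lmulT k A a (ι - 1 ⊗ₜ[k] 1) - rmulT k A a (ι - 1 ⊗ₜ[k] 1)) ∧
    ((∃ ι : A ⊗[k] A, mulMap k A ι = 1 ∧ ∀ a : A, lmulT k A a ι = rmulT k A a ι) →
      ∃ D : {g : ↥(univForms k A) →ₗ[k] M // RtLinU k A g} → M,
        (∀ f g s : {g : ↥(univForms k A) →ₗ[k] M // RtLinU k A g},
          s.1 = f.1 + g.1 → D s = D f + D g) ∧
        (∀ (c : k) (f s : {g : ↥(univForms k A) →ₗ[k] M // RtLinU k A g}),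
          s.1 = c • f.1 → D s = c • D f) ∧
        (∀ (f fa : {g : ↥(univForms k A) →ₗ[k] M // RtLinU k A g}) (a : A),
          (∀ (t : ↥(univForms k A)) (h : lmulT k A a t.1 ∈ univForms k A),
            fa.1 t = f.1 ⟨lmulT k A a t.1, h⟩) →
          ∀ h' : du k A a ∈ univForms k A,
            D fa = op a • D f + f.1 ⟨du k A a, h'⟩)) := by
  refine ⟨⟨?inner_to_separable, ?separable_to_inner⟩,
    fun ι h1 h2 => isInnerForm_sub_one_tmul_one k A ⟨h1, h2⟩, ?homConnection⟩
  case inner_to_separable =>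
    rintro ⟨Ξ, hΞ⟩
    exact ⟨Ξ + 1 ⊗ₜ[k] 1, (isInnerForm_iff_isSeparabilityIdempotent_add k A Ξ).1 hΞ⟩
  case separable_to_inner =>
    rintro ⟨ι, hι⟩
    exact ⟨ι - 1 ⊗ₜ[k] 1, isInnerForm_sub_one_tmul_one k A hι⟩
  case homConnection =>
    rintro ⟨ι, hι⟩
    have hΞ := isInnerForm_sub_one_tmul_one k A hι
    exact ⟨fun g => g.1 ⟨_, hΞ.1⟩, hΞ.isHomConnection_eval⟩

end
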